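/- Every selective subset of the gadget graph G_θ has cardinality at least 2n + m: for each variable x_i it must contain a red vertex from {x_{i,1}, x̄_{i,1}} and a blue vertex from {x_{i,2}, x_{i,3}, x̄_{i,2}, x̄_{i,3}}, and for each clause c_j it must contain a red vertex from {c_{j,1}, c_{j,2}}. -/

import Mathlib

/-- The set of nearest neighbors of `v` in `U` with respect to hop-distance in `G`:
`N̂(v,U) = {u ∈ U : d(v,u) = min_{w ∈ U} d(v,w)}` (empty if `U` is empty). -/
def NearestSet {V : Type*} (G : SimpleGraph V) (v : V) (U : Set V) : Set V :=
  {u | u ∈ U ∧ ∀ w ∈ U, G.dist v u ≤ G.dist v w}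

/-- `S` is a selective subset of `(G, C)`: every vertex `v` has, among its nearest
neighbors in `S ∪ (V ∖ V_{C v})`, at least one vertex of its own color. -/
def IsSelective {V α : Type*} (G : SimpleGraph V) (C : V → α) (S : Set V) : Prop :=
  ∀ v : V, ∃ u ∈ NearestSet G v (S ∪ {w | C w ≠ C v}), C u = C v

/-- Vertices of the gadget graph `G_θ` for a monotone 3-CNF formula with `n` variables and
`m` clauses. `var i s k` is `x_{i,k+1}` when `s = true` and `x̄_{i,k+1}` when `s = false`;
`cl j k` is the clause vertex `c_{j,k+1}`. -/
inductive GVert (n m : ℕ) where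
  | var (i : Fin n) (s : Bool) (k : Fin 3)
  | cl (j : Fin m) (k : Fin 3)
deriving DecidableEq

/-- The edges of the gadget graph `G_θ` (up to symmetry). The formula is described by
`pos j` (true iff clause `j` is positive) and `lit j` (its three variables). -/
def gadgetRel {n m : ℕ} (pos : Fin m → Bool) (lit : Fin m → Fin 3 → Fin n)
    (a b : GVert n m) : Prop :=
  -- literal paths x_{i,1}x_{i,2}, x_{i,2}x_{i,3}, x̄_{i,1}x̄_{i,2}, x̄_{i,2}x̄_{i,3}
  (∃ (i : Fin n) (s : Bool),
      (a = GVert.var i s 0 ∧ b = GVert.var i s 1) ∨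
      (a = GVert.var i s 1 ∧ b = GVert.var i s 2)) ∨
  -- cross edges x_{i,1}x̄_{i,1}, x_{i,2}x̄_{i,3}, x_{i,3}x̄_{i,2}, x_{i,3}x̄_{i,3}
  (∃ i : Fin n,
      (a = GVert.var i true 0 ∧ b = GVert.var i false 0) ∨
      (a = GVert.var i true 1 ∧ b = GVert.var i false 2) ∨
      (a = GVert.var i true 2 ∧ b = GVert.var i false 1) ∨
      (a = GVert.var i true 2 ∧ b = GVert.var i false 2)) ∨
  -- clause paths c_{j,1}c_{j,2}, c_{j,2}c_{j,3}
  (∃ j : Fin m,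
      (a = GVert.cl j 0 ∧ b = GVert.cl j 1) ∨
      (a = GVert.cl j 1 ∧ b = GVert.cl j 2)) ∨
  -- clause-literal edges c_{j,3} to the third vertex of each of its literal paths
  (∃ (j : Fin m) (k : Fin 3), a = GVert.cl j 2 ∧ b = GVert.var (lit j k) (pos j) 2)

/-- The gadget graph `G_θ`. -/
def gadgetGraph {n m : ℕ} (pos : Fin m → Bool) (lit : Fin m → Fin 3 → Fin n) :
    SimpleGraph (GVert n m) :=
  SimpleGraph.fromRel (gadgetRel pos lit)

/-- The 2-coloring of `G_θ`: `true` = red, `false` = blue. `x_{i,1}, x̄_{i,1}` and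
`c_{j,1}, c_{j,2}` are red; all other vertices are blue. -/
def gadgetColor {n m : ℕ} : GVert n m → Bool
  | GVert.var _ _ k => k == 0
  | GVert.cl _ k => !(k == 2)

/-!
If `S` is selective and `v` has a vertex of the other colour at distance `d`, then the nearest
vertices of `S ∪ (V ∖ V_{C v})` include one of `v`'s colour, which must lie in `S` and is at
distance at most `d` from `v`. At `x_{i,1}` (blue neighbour `x_{i,2}`), at `x_{i,2}` (red
neighbour `x_{i,1}`) and at `c_{j,1}` (blue `c_{j,3}` two steps away) the neighbourhoods of
`G_θ` are small enough to read off the three required witnesses, and these lie in `2n + m`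
pairwise disjoint classes of vertices.
-/

open SimpleGraph

namespace SimpleGraph

variable {V : Type*} {G : SimpleGraph V} {u v : V}

lemma Connected.eq_or_adj_of_dist_le_one (hG : G.Connected) (h : G.dist u v ≤ 1) :
    v = u ∨ G.Adj u v := by
  have : G.edist u v ≤ 1 := by rw [← (hG u v).coe_dist_eq_edist]; exact_mod_cast h
  exact (edist_le_one_iff_adj_or_eq.mp this).symm.imp_left Eq.symm

lemma Connected.eq_or_adj_or_exists_adj_adj_of_dist_le_two (hG : G.Connected)
    (h : G.dist u v ≤ 2) : v = u ∨ G.Adj u v ∨ ∃ w, G.Adj u w ∧ G.Adj w v := by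
  by_contra! hfar
  obtain ⟨hne, hnadj, hcommon⟩ := hfar
  have hfar : 2 < G.edist u v := two_lt_edist_iff.mpr
    ⟨Ne.symm hne, hnadj, Set.eq_empty_of_forall_notMem fun w hw => hcommon w hw.1 hw.2.symm⟩
  rw [← (hG u v).coe_dist_eq_edist] at hfar
  exact absurd h (by exact_mod_cast hfar.not_ge)

end SimpleGraph

namespace IsSelective

variable {V α : Type*} {G : SimpleGraph V} {C : V → α} {S : Set V} {v w x : V}

lemma exists_mem_color_eq_dist_le (hS : IsSelective G C S) (hw : C w ≠ C v) :
    ∃ u ∈ S, C u = C v ∧ G.dist v u ≤ G.dist v w := by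
  obtain ⟨u, ⟨hu, hmin⟩, hcol⟩ := hS v
  exact ⟨u, hu.resolve_right (· hcol), hcol, hmin w (Or.inr hw)⟩

lemma exists_mem_color_eq_of_adj (hS : IsSelective G C S) (hG : G.Connected)
    (hvw : G.Adj v w) (hw : C w ≠ C v) : ∃ u ∈ S, C u = C v ∧ (u = v ∨ G.Adj v u) := by
  obtain ⟨u, huS, hcol, hle⟩ := hS.exists_mem_color_eq_dist_le hw
  rw [dist_eq_one_iff_adj.mpr hvw] at hle
  exact ⟨u, huS, hcol, hG.eq_or_adj_of_dist_le_one hle⟩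

lemma exists_mem_color_eq_of_adj_adj (hS : IsSelective G C S) (hG : G.Connected)
    (hvx : G.Adj v x) (hxw : G.Adj x w) (hw : C w ≠ C v) :
    ∃ u ∈ S, C u = C v ∧ (u = v ∨ G.Adj v u ∨ ∃ y, G.Adj v y ∧ G.Adj y u) := by
  obtain ⟨u, huS, hcol, hle⟩ := hS.exists_mem_color_eq_dist_le hw
  have : G.dist v w ≤ 2 := dist_le (.cons hvx (.cons hxw .nil))
  exact ⟨u, huS, hcol, hG.eq_or_adj_or_exists_adj_adj_of_dist_le_two (hle.trans this)⟩

end IsSelective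

lemma Set.card_le_ncard_of_forall_exists_mem {α β : Type*} [Finite α] {S : Set α}
    (f : α → β) (hf : ∀ b, ∃ a ∈ S, f a = b) : Nat.card β ≤ S.ncard := by
  have : f '' S = Set.univ := Set.eq_univ_of_forall fun b => hf b
  rw [← Set.ncard_univ, ← this]
  exact Set.ncard_image_le

namespace GVert

variable {n m : ℕ}

instance : Finite (GVert n m) :=
  Finite.of_surjective
    (Sum.elim (fun p : Fin n × Bool × Fin 3 => var p.1 p.2.1 p.2.2) fun p : Fin m × Fin 3 =>
      cl p.1 p.2)
    (by rintro (⟨i, s, k⟩ | ⟨j, k⟩); exacts [⟨.inl (i, s, k), rfl⟩, ⟨.inr (j, k), rfl⟩])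

def gadgetClass : GVert n m → (Fin n ⊕ Fin n) ⊕ Fin m
  | var i _ 0 => .inl (.inl i)
  | var i _ _ => .inl (.inr i)
  | cl j _ => .inr j

end GVert

section Gadget

variable {n m : ℕ} (pos : Fin m → Bool) (lit : Fin m → Fin 3 → Fin n)

lemma gadgetGraph_adj_var_zero_iff (i : Fin n) (s : Bool) (u : GVert n m) :
    (gadgetGraph pos lit).Adj (.var i s 0) u ↔ u = .var i s 1 ∨ u = .var i (!s) 0 := by
  cases s <;> simp [gadgetGraph, gadgetRel] <;> aesop

lemma gadgetGraph_adj_var_one_iff (i : Fin n) (s : Bool) (u : GVert n m) :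
    (gadgetGraph pos lit).Adj (.var i s 1) u ↔
      u = .var i s 0 ∨ u = .var i s 2 ∨ u = .var i (!s) 2 := by
  cases s <;> simp [gadgetGraph, gadgetRel] <;> aesop

lemma gadgetGraph_adj_cl_zero_iff (j : Fin m) (u : GVert n m) :
    (gadgetGraph pos lit).Adj (.cl j 0) u ↔ u = .cl j 1 := by
  simp [gadgetGraph, gadgetRel]; aesop

lemma gadgetGraph_adj_cl_one_iff (j : Fin m) (u : GVert n m) :
    (gadgetGraph pos lit).Adj (.cl j 1) u ↔ u = .cl j 0 ∨ u = .cl j 2 := by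
  simp [gadgetGraph, gadgetRel]; aesop

variable {pos lit} (hconn : (gadgetGraph pos lit).Connected) {S : Set (GVert n m)}
  (hS : IsSelective (gadgetGraph pos lit) gadgetColor S)
include hconn hS

lemma IsSelective.exists_var_zero_mem (i : Fin n) : ∃ s : Bool, GVert.var i s 0 ∈ S := by
  have hadj := (gadgetGraph_adj_var_zero_iff pos lit i true _).mpr (.inl rfl)
  obtain ⟨u, huS, hcol, rfl | hvu⟩ := hS.exists_mem_color_eq_of_adj hconn hadj (by simp [gadgetColor])
  · exact ⟨true, huS⟩
  · rcases (gadgetGraph_adj_var_zero_iff pos lit i true u).mp hvu with rfl | rfl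
    · simp [gadgetColor] at hcol
    · exact ⟨false, huS⟩

lemma IsSelective.exists_var_ne_zero_mem (i : Fin n) :
    ∃ (s : Bool) (k : Fin 3), k ≠ 0 ∧ GVert.var i s k ∈ S := by
  have hadj := (gadgetGraph_adj_var_one_iff pos lit i true _).mpr (.inl rfl)
  obtain ⟨u, huS, hcol, rfl | hvu⟩ := hS.exists_mem_color_eq_of_adj hconn hadj (by simp [gadgetColor])
  · exact ⟨true, 1, by decide, huS⟩
  · rcases (gadgetGraph_adj_var_one_iff pos lit i true u).mp hvu with rfl | rfl | rfl
    · simp [gadgetColor] at hcol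
    · exact ⟨true, 2, by decide, huS⟩
    · exact ⟨false, 2, by decide, huS⟩

lemma IsSelective.cl_zero_mem_or_cl_one_mem (j : Fin m) :
    GVert.cl j 0 ∈ S ∨ GVert.cl j 1 ∈ S := by
  have hadj₀ := (gadgetGraph_adj_cl_zero_iff pos lit j _).mpr rfl
  have hadj₁ := (gadgetGraph_adj_cl_one_iff pos lit j _).mpr (.inr rfl)
  obtain ⟨u, huS, hcol, rfl | hvu | ⟨y, hvy, hyu⟩⟩ :=
    hS.exists_mem_color_eq_of_adj_adj hconn hadj₀ hadj₁ (by simp [gadgetColor])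
  · exact .inl huS
  · rw [(gadgetGraph_adj_cl_zero_iff pos lit j u).mp hvu] at huS
    exact .inr huS
  · rw [(gadgetGraph_adj_cl_zero_iff pos lit j y).mp hvy] at hyu
    rcases (gadgetGraph_adj_cl_one_iff pos lit j u).mp hyu with rfl | rfl
    · exact .inl huS
    · simp [gadgetColor] at hcol

end Gadget

theorem stmt_12_general {n m : ℕ} (pos : Fin m → Bool) (lit : Fin m → Fin 3 → Fin n)
    (hconn : (gadgetGraph pos lit).Connected)
    (S : Set (GVert n m)) (hS : IsSelective (gadgetGraph pos lit) gadgetColor S) :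
    2 * n + m ≤ S.ncard ∧
      (∀ i : Fin n,
        (∃ s : Bool, GVert.var i s 0 ∈ S) ∧
        (∃ (s : Bool) (k : Fin 3), k ≠ 0 ∧ GVert.var i s k ∈ S)) ∧
      (∀ j : Fin m, GVert.cl j 0 ∈ S ∨ GVert.cl j 1 ∈ S) := by
  have hred := hS.exists_var_zero_mem hconn
  have hblue := hS.exists_var_ne_zero_mem hconn
  have hclause := hS.cl_zero_mem_or_cl_one_mem hconn
  refine ⟨?_, fun i => ⟨hred i, hblue i⟩, hclause⟩
  have hmeets : ∀ c, ∃ v ∈ S, v.gadgetClass = c := by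
    rintro ((i | i) | j)
    · obtain ⟨s, hs⟩ := hred i
      exact ⟨_, hs, rfl⟩
    · obtain ⟨s, k, hk, hs⟩ := hblue i
      refine ⟨_, hs, ?_⟩
      fin_cases k <;> first | exact absurd rfl hk | rfl
    · obtain h | h := hclause j <;> exact ⟨_, h, rfl⟩
  calc 2 * n + m = Nat.card ((Fin n ⊕ Fin n) ⊕ Fin m) := by simp [two_mul]
    _ ≤ S.ncard := Set.card_le_ncard_of_forall_exists_mem _ hmeets

/-- Every selective subset of `G_θ` has cardinality at least `2n + m`: for each variable
`x_i` it contains a red vertex from `{x_{i,1}, x̄_{i,1}}` and a blue vertex from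
`{x_{i,2}, x_{i,3}, x̄_{i,2}, x̄_{i,3}}`, and for each clause `c_j` it contains a red
vertex from `{c_{j,1}, c_{j,2}}`. -/
theorem stmt_12 {n m : ℕ} (pos : Fin m → Bool) (lit : Fin m → Fin 3 → Fin n)
    (hdis : ∀ j : Fin m, Function.Injective (lit j))
    (hconn : (gadgetGraph pos lit).Connected)
    (S : Set (GVert n m)) (hS : IsSelective (gadgetGraph pos lit) gadgetColor S) :
    2 * n + m ≤ S.ncard ∧
      (∀ i : Fin n,
        (∃ s : Bool, GVert.var i s 0 ∈ S) ∧
        (∃ (s : Bool) (k : Fin 3), k ≠ 0 ∧ GVert.var i s k ∈ S)) ∧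
      (∀ j : Fin m, GVert.cl j 0 ∈ S ∨ GVert.cl j 1 ∈ S) :=
  stmt_12_general pos lit hconn S hS
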